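/- Let α, β ∈ ℂ, let I ⊆ ℝ∖{0} be an open interval, and let u₁, u₂, v₁, v₂ : I → ℂ be differentiable functions satisfying the coupled Painlevé V system with parameters (α, β) on I. Then, with H the Hamiltonian of the system, the function s ↦ s·H(s) is differentiable on I and d/ds (s·H(s)) = −(1/2)·(u₁(s)v₁(s) − u₂(s)v₂(s)) for all s ∈ I. -/

import Mathlib

open Complex Filter Topology MeasureTheory

/-- Right-hand side of the `u₁`-equation of the coupled Painlevé V system in
dimension four: `s·u₁′ = (s/2)u₁ − u₁²(v₁−1)(3v₁−1) − u₁u₂(v₂−1)(2v₁+v₂−1)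
+ 2(α+β)u₁v₁ − 2βu₁`. -/
noncomputable def cpvRHSu₁ (α β s u₁ u₂ v₁ v₂ : ℂ) : ℂ :=
  (s / 2) * u₁ - u₁ ^ 2 * (v₁ - 1) * (3 * v₁ - 1)
    - u₁ * u₂ * (v₂ - 1) * (2 * v₁ + v₂ - 1) + 2 * (α + β) * u₁ * v₁ - 2 * β * u₁

/-- Right-hand side of the `u₂`-equation of the coupled Painlevé V system. -/
noncomputable def cpvRHSu₂ (α β s u₁ u₂ v₁ v₂ : ℂ) : ℂ :=
  -(s / 2) * u₂ - u₂ ^ 2 * (v₂ - 1) * (3 * v₂ - 1)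
    - u₁ * u₂ * (v₁ - 1) * (v₁ + 2 * v₂ - 1) + 2 * (α + β) * u₂ * v₂ - 2 * β * u₂

/-- Right-hand side of the `v₁`-equation of the coupled Painlevé V system. -/
noncomputable def cpvRHSv₁ (α β s u₁ u₂ v₁ v₂ : ℂ) : ℂ :=
  -(s / 2) * v₁ + 2 * u₁ * v₁ * (v₁ - 1) ^ 2
    + u₂ * (v₁ + v₂) * (v₁ - 1) * (v₂ - 1) - α * (v₁ ^ 2 - 1) - β * (v₁ - 1) ^ 2

/-- Right-hand side of the `v₂`-equation of the coupled Painlevé V system. -/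
noncomputable def cpvRHSv₂ (α β s u₁ u₂ v₁ v₂ : ℂ) : ℂ :=
  (s / 2) * v₂ + 2 * u₂ * v₂ * (v₂ - 1) ^ 2
    + u₁ * (v₁ + v₂) * (v₁ - 1) * (v₂ - 1) - α * (v₂ ^ 2 - 1) - β * (v₂ - 1) ^ 2

/-- `s·H` for the coupled Painlevé V system: `s·H = u₁²v₁(v₁−1)² + u₂²v₂(v₂−1)²
− (s/2)(u₁v₁ − u₂v₂) − α(u₁(v₁²−1) + u₂(v₂²−1)) − β(u₁(v₁−1)² + u₂(v₂−1)²)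
+ u₁u₂(v₁+v₂)(v₁−1)(v₂−1)`. -/
noncomputable def cpvSH (α β s u₁ u₂ v₁ v₂ : ℂ) : ℂ :=
  u₁ ^ 2 * v₁ * (v₁ - 1) ^ 2 + u₂ ^ 2 * v₂ * (v₂ - 1) ^ 2
    - (s / 2) * (u₁ * v₁ - u₂ * v₂)
    - α * (u₁ * (v₁ ^ 2 - 1) + u₂ * (v₂ ^ 2 - 1))
    - β * (u₁ * (v₁ - 1) ^ 2 + u₂ * (v₂ - 1) ^ 2)
    + u₁ * u₂ * (v₁ + v₂) * (v₁ - 1) * (v₂ - 1)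

/-- The Hamiltonian `H` of the coupled Painlevé V system, defined by `s·H = cpvSH`. -/
noncomputable def cpvH (α β s u₁ u₂ v₁ v₂ : ℂ) : ℂ := cpvSH α β s u₁ u₂ v₁ v₂ / s

/-- `(u₁, u₂, v₁, v₂)` is a solution of the coupled Painlevé V system in dimension
four with parameters `(α, β)` on a set `I ⊆ ℝ` of (nonzero) real values of `s`. -/
def IsCPVSolutionOn (α β : ℂ) (I : Set ℝ) (u₁ u₂ v₁ v₂ : ℝ → ℂ) : Prop :=
  ∀ s ∈ I,
    DifferentiableAt ℝ u₁ s ∧ DifferentiableAt ℝ u₂ s ∧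
    DifferentiableAt ℝ v₁ s ∧ DifferentiableAt ℝ v₂ s ∧
    (s : ℂ) * deriv u₁ s = cpvRHSu₁ α β s (u₁ s) (u₂ s) (v₁ s) (v₂ s) ∧
    (s : ℂ) * deriv u₂ s = cpvRHSu₂ α β s (u₁ s) (u₂ s) (v₁ s) (v₂ s) ∧
    (s : ℂ) * deriv v₁ s = cpvRHSv₁ α β s (u₁ s) (u₂ s) (v₁ s) (v₂ s) ∧
    (s : ℂ) * deriv v₂ s = cpvRHSv₂ α β s (u₁ s) (u₂ s) (v₁ s) (v₂ s)

/-- `(u₁, u₂, v₁, v₂)`, as functions of `t > 0`, form a solution of the coupled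
Painlevé V system with parameters `(α, β)` on the negative imaginary ray
`s = −it`, `t > 0`, where `d/ds` is interpreted as `i·d/dt`. -/
def IsCPVSolutionNegIm (α β : ℂ) (u₁ u₂ v₁ v₂ : ℝ → ℂ) : Prop :=
  ∀ t : ℝ, 0 < t →
    DifferentiableAt ℝ u₁ t ∧ DifferentiableAt ℝ u₂ t ∧
    DifferentiableAt ℝ v₁ t ∧ DifferentiableAt ℝ v₂ t ∧
    (-Complex.I * t) * (Complex.I * deriv u₁ t)
      = cpvRHSu₁ α β (-Complex.I * t) (u₁ t) (u₂ t) (v₁ t) (v₂ t) ∧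
    (-Complex.I * t) * (Complex.I * deriv u₂ t)
      = cpvRHSu₂ α β (-Complex.I * t) (u₁ t) (u₂ t) (v₁ t) (v₂ t) ∧
    (-Complex.I * t) * (Complex.I * deriv v₁ t)
      = cpvRHSv₁ α β (-Complex.I * t) (u₁ t) (u₂ t) (v₁ t) (v₂ t) ∧
    (-Complex.I * t) * (Complex.I * deriv v₂ t)
      = cpvRHSv₂ α β (-Complex.I * t) (u₁ t) (u₂ t) (v₁ t) (v₂ t)

/- The system is Hamiltonian with Hamiltonian `s·H`: its partial derivatives are
`∂(sH)/∂uᵢ = cpvRHSvᵢ` and `∂(sH)/∂vᵢ = -cpvRHSuᵢ`, so along a solution the `uᵢ`- and `vᵢ`-terms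
of the chain rule cancel pairwise and only the explicit `s`-dependence of `s·H` survives. -/

theorem hasDerivAt_cpvSH_comp (α β : ℂ) {u₁ u₂ v₁ v₂ : ℝ → ℂ} {u₁' u₂' v₁' v₂' : ℂ} {s : ℝ}
    (hu₁ : HasDerivAt u₁ u₁' s) (hu₂ : HasDerivAt u₂ u₂' s)
    (hv₁ : HasDerivAt v₁ v₁' s) (hv₂ : HasDerivAt v₂ v₂' s) :
    HasDerivAt (fun x : ℝ => cpvSH α β (x : ℂ) (u₁ x) (u₂ x) (v₁ x) (v₂ x))
      (-(1/2) * (u₁ s * v₁ s - u₂ s * v₂ s)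
        + cpvRHSv₁ α β s (u₁ s) (u₂ s) (v₁ s) (v₂ s) * u₁'
        + cpvRHSv₂ α β s (u₁ s) (u₂ s) (v₁ s) (v₂ s) * u₂'
        - cpvRHSu₁ α β s (u₁ s) (u₂ s) (v₁ s) (v₂ s) * v₁'
        - cpvRHSu₂ α β s (u₁ s) (u₂ s) (v₁ s) (v₂ s) * v₂') s := by
  have hs : HasDerivAt (fun x : ℝ => (x : ℂ)) 1 s := (hasDerivAt_id s).ofReal_comp
  have hw₁ := hv₁.sub_const 1
  have hw₂ := hv₂.sub_const 1
  have quartic := ((hu₁.fun_pow 2).mul hv₁).mul (hw₁.fun_pow 2) |>.add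
    (((hu₂.fun_pow 2).mul hv₂).mul (hw₂.fun_pow 2))
  have explicit := (hs.div_const 2).mul ((hu₁.mul hv₁).sub (hu₂.mul hv₂))
  have alphaTerm := ((hu₁.mul ((hv₁.fun_pow 2).sub_const 1)).add
    (hu₂.mul ((hv₂.fun_pow 2).sub_const 1))).const_mul α
  have betaTerm := ((hu₁.mul (hw₁.fun_pow 2)).add (hu₂.mul (hw₂.fun_pow 2))).const_mul β
  have coupling := (((hu₁.mul hu₂).mul (hv₁.add hv₂)).mul hw₁).mul hw₂
  refine ((((quartic.sub explicit).sub alphaTerm).sub betaTerm).add coupling).congr_deriv ?_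
  simp only [cpvRHSu₁, cpvRHSu₂, cpvRHSv₁, cpvRHSv₂, Pi.add_apply, Pi.mul_apply, Pi.sub_apply]
  ring

theorem cpv_sH_deriv
    (α β : ℂ) (I : Set ℝ) (u₁ u₂ v₁ v₂ : ℝ → ℂ)
    (hsol : IsCPVSolutionOn α β I u₁ u₂ v₁ v₂) :
    ∀ s ∈ I,
      HasDerivAt (fun x : ℝ => cpvSH α β (x : ℂ) (u₁ x) (u₂ x) (v₁ x) (v₂ x))
        (-(1/2) * (u₁ s * v₁ s - u₂ s * v₂ s)) s := by
  intro s hs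
  obtain ⟨hu₁, hu₂, hv₁, hv₂, eu₁, eu₂, ev₁, ev₂⟩ := hsol s hs
  refine (hasDerivAt_cpvSH_comp α β hu₁.hasDerivAt hu₂.hasDerivAt hv₁.hasDerivAt
    hv₂.hasDerivAt).congr_deriv ?_
  rw [← eu₁, ← eu₂, ← ev₁, ← ev₂]
  ring
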